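/- Let g be a Lie superalgebra with an even invariant supersymmetric bilinear form (·|·). Define on Cur̃(g) = ℂ[∂]⊗(g⊕ḡ)⊕ℂK the λ-brackets [a_λ b] = [a,b] + Kλ(a|b), [a_λ b̄] = (-1)^{p(a)} overline([a,b]), [b̄_λ a] determined by skew-symmetry, [ā_λ b̄] = (-1)^{p(a)}K(a|b), with K central and ∂K = 0. Then Cur̃(g) is a Lie conformal algebra, and with the odd derivation D defined by D(ā) = a, D(a) = ∂ā, D(K) = 0, the set ḡ is a supersymmetric generator in the D-direction (i.e. (SEF1) and (SEF2) hold for all pairs from ḡ). -/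

import Mathlib

open scoped BigOperators
noncomputable section

namespace VAx

/-- `(-1)^p` for a parity `p` (`true` = odd). -/
def psgn (p : Bool) : ℂ := if p then -1 else 1

/-- `(-1)^{pq}` for parities `p`, `q`. -/
def sgn (p q : Bool) : ℂ := if p && q then -1 else 1

/-- Multiplication by `λ` on a `λ`-expansion `f = ∑ λ^m • f m`. -/
def lam {W : Type*} [AddCommGroup W] (f : ℕ → W) : ℕ → W :=
  fun m => match m with
  | 0 => 0
  | n + 1 => f n

variable (V : Type*) [AddCommGroup V] [Module ℂ V]

/-- Underlying data of a (super) Lie conformal algebra: a `ℤ/2ℤ`-grading (`part false` the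
even part, `part true` the odd part), an even derivation `∂ = der`, and a `λ`-bracket encoded
by its coefficients: `[a_λ b] = ∑_m λ^m • B a b m` (so `B a b m = a_{(m)} b / m!`). -/
structure LCAData where
  part : Bool → Submodule ℂ V
  der : V →ₗ[ℂ] V
  B : V →ₗ[ℂ] V →ₗ[ℂ] (ℕ → V)

/-- Underlying data of a vertex algebra: a Lie conformal algebra datum together with a
vacuum vector and the normally ordered product. -/
structure VAData extends LCAData V where
  one : V
  M : V →ₗ[ℂ] V →ₗ[ℂ] V

variable {V}

namespace LCAData

variable (S : LCAData V)

/-- Coefficientwise form of the Jacobi identity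
`[a_λ [b_γ c]] = [[a_λ b]_{λ+γ} c] + (-1)^{p(a)p(b)} [b_γ [a_λ c]]`
at the coefficient of `λ^m γ^n`. -/
def JacEq (p q : Bool) (a b c : V) (m n : ℕ) : Prop :=
  S.B a (S.B b c n) m =
    (∑ j ∈ Finset.range (m + 1),
      ((Nat.choose (m - j + n) (m - j) : ℂ)) • S.B (S.B a b j) c (m - j + n))
    + sgn p q • S.B b (S.B a c m) n

/-- Coefficientwise form of skew-symmetry `[b_λ a] = (-1)^{p(a)p(b)+1}[a_{-∂-λ} b]`,
given a bound `N` on the support of `[a_λ b]`. -/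
def SkewEq (p q : Bool) (a b : V) (N : ℕ) : Prop :=
  ∀ k, S.B b a k = (- sgn p q) •
    ∑ m ∈ Finset.Icc k N, (((-1 : ℂ)) ^ m * (m.choose k : ℂ)) • ((S.der ^ (m - k)) (S.B a b m))

/-- The axioms of a (super) Lie conformal algebra, expressed coefficientwise on the
`λ`-expansion `[a_λ b] = ∑ λ^m • B a b m`. -/
structure IsLCA : Prop where
  hom_der : ∀ p, ∀ a ∈ S.part p, S.der a ∈ S.part p
  hom_B : ∀ p q a b, a ∈ S.part p → b ∈ S.part q → ∀ m, S.B a b m ∈ S.part (xor p q)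
  sesq1 : ∀ a b, S.B (S.der a) b 0 = 0 ∧ ∀ m, S.B (S.der a) b (m + 1) = - S.B a b m
  sesq2 : ∀ a b, S.B a (S.der b) 0 = S.der (S.B a b 0) ∧
    ∀ m, S.B a (S.der b) (m + 1) = S.der (S.B a b (m + 1)) + S.B a b m
  bfin : ∀ a b, ∃ N, ∀ m, N ≤ m → S.B a b m = 0
  skew : ∀ p q a b N, a ∈ S.part p → b ∈ S.part q →
    (∀ m, N ≤ m → S.B a b m = 0) → S.SkewEq p q a b N
  jacobi : ∀ p q a b c, a ∈ S.part p → b ∈ S.part q → ∀ m n, S.JacEq p q a b c m n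

/-- The supersymmetric extension formulas (SEF1) and (SEF2) for the ordered pair `(x, y)`
(thought of as `(ā, b̄)`), where `p` is the parity of `x` and `D` is the odd endomorphism:
(SEF1) `[Dx_λ Dy] = (-1)^{p(x)+1}(D[Dx_λ y] + λ[x_λ y])`,
(SEF2) `[x_λ Dy] = (-1)^{p(x)+1}([Dx_λ y] - D[x_λ y])`. -/
def SEF (D : Module.End ℂ V) (p : Bool) (x y : V) : Prop :=
  (∀ m, S.B (D x) (D y) m = psgn (!p) • (D (S.B (D x) y m) + lam (S.B x y) m)) ∧
  (∀ m, S.B x (D y) m = psgn (!p) • (S.B (D x) y m - D (S.B x y m)))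

end LCAData

namespace VAData

variable (S : VAData V)

/-- The integral term `∫_0^λ [[a_λ b]_γ c] dγ` of the non-commutative Wick formula, at the
coefficient of `λ^k`, where `f` is the `λ`-expansion of `[a_λ b]`. -/
def wickInt (f : ℕ → V) (c : V) : ℕ → V :=
  fun k => ∑ n ∈ Finset.range k, ((n + 1 : ℂ))⁻¹ • S.B (f (k - 1 - n)) c n

/-- The axioms of a vertex algebra, in the `λ`-bracket formalism, expressed coefficientwise. -/
structure IsVA : Prop where
  isLCA : S.toLCAData.IsLCA
  one_even : S.one ∈ S.part false
  der_one : S.der S.one = 0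
  M_one_left : ∀ a, S.M S.one a = a
  M_one_right : ∀ a, S.M a S.one = a
  B_one_left : ∀ a m, S.B S.one a m = 0
  B_one_right : ∀ a m, S.B a S.one m = 0
  hom_M : ∀ p q a b, a ∈ S.part p → b ∈ S.part q → S.M a b ∈ S.part (xor p q)
  qcomm : ∀ p q a b N, a ∈ S.part p → b ∈ S.part q → (∀ m, N ≤ m → S.B a b m = 0) →
    S.M a b - sgn p q • S.M b a =
      ∑ m ∈ Finset.range (N + 1),
        (((-1 : ℂ) ^ m) * ((m + 1 : ℂ))⁻¹) • ((S.der ^ (m + 1)) (S.B a b m))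
  wick : ∀ p q a b c, a ∈ S.part p → b ∈ S.part q → ∀ k,
    S.B a (S.M b c) k = S.M (S.B a b k) c + sgn p q • S.M b (S.B a c k)
      + S.wickInt (S.B a b) c k

/-- `D` is an odd endomorphism of `V` which is an odd derivation of both the normally ordered
product and the `λ`-bracket. -/
def IsOddDerivation (D : Module.End ℂ V) : Prop :=
  (∀ p, ∀ a ∈ S.part p, D a ∈ S.part (!p)) ∧
  (∀ p a b, a ∈ S.part p → D (S.M a b) = S.M (D a) b + psgn p • S.M a (D b)) ∧
  (∀ p a b m, a ∈ S.part p → D (S.B a b m) = S.B (D a) b m + psgn p • S.B a (D b) m)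

/-- The operator `x ↦ a_{(k)} x` (normalized by `1/k!`). -/
def opAt (a : V) (k : ℕ) : Module.End ℂ V :=
  (LinearMap.proj (R := ℂ) (φ := fun _ : ℕ => V) k).comp (S.B a)

/-- Diagonalizability of an endomorphism. -/
def IsDiag (f : Module.End ℂ V) : Prop :=
  (⨆ μ : ℂ, f.eigenspace μ) = ⊤

/-- `G` is an `N = 1` superconformal vector of `V` with central charge `c`: `G` is odd,
`L := (1/2) G_{(0)} G` is a conformal vector (`L_{(0)} = ∂`, `L_{(1)}` diagonalizable), and the
super-Virasoro relations `[L_λ L] = (∂+2λ)L + (c/12)λ³ |0⟩`, `[L_λ G] = (∂ + (3/2)λ)G`,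
`[G_λ G] = 2L + (c/3)λ² |0⟩` hold. -/
def IsSCV (G : V) (c : ℂ) : Prop :=
  G ∈ S.part true ∧
  S.B G G 1 = 0 ∧
  S.B G G 2 = (c / 3) • S.one ∧
  (∀ m, 3 ≤ m → S.B G G m = 0) ∧
  (S.B ((1 / 2 : ℂ) • S.B G G 0) ((1 / 2 : ℂ) • S.B G G 0) = fun m =>
    match m with
    | 0 => S.der ((1 / 2 : ℂ) • S.B G G 0)
    | 1 => (2 : ℂ) • ((1 / 2 : ℂ) • S.B G G 0)
    | 3 => (c / 12) • S.one
    | _ => 0) ∧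
  (S.B ((1 / 2 : ℂ) • S.B G G 0) G = fun m =>
    match m with
    | 0 => S.der G
    | 1 => (3 / 2 : ℂ) • G
    | _ => 0) ∧
  (∀ x, S.B ((1 / 2 : ℂ) • S.B G G 0) x 0 = S.der x) ∧
  IsDiag (S.opAt ((1 / 2 : ℂ) • S.B G G 0) 1)

/-- The `N = 1` `Λ`-bracket `[a_Λ b] := [Da_λ b] + χ[a_λ b]`, encoded as the pair
`(λ`-expansion of `[Da_λ b]`, `λ`-expansion of `[a_λ b])` (the second component being the
coefficient of `χ`). -/
def SB (D : Module.End ℂ V) (a b : V) : (ℕ → V) × (ℕ → V) :=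
  (S.B (D a) b, S.B a b)

end VAData

end VAx

open VAx VAx.LCAData

variable {V : Type*} [AddCommGroup V] [Module ℂ V]
variable {g : Type*} [AddCommGroup g] [Module ℂ g]

/-- The generators of `Cur̃(g) = ℂ[∂]⊗(g ⊕ ḡ) ⊕ ℂK` inside `V`, with their parities:
currents `a` (`a ∈ g` of parity `p`), barred currents `ā` (of parity `p(a)+1`), and `K`. -/
def CurGen (pg : Bool → Submodule ℂ g) (cur barv : g →ₗ[ℂ] V) (K : V)
    (x : V) (p : Bool) : Prop :=
  (∃ a, a ∈ pg p ∧ x = cur a) ∨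
  (∃ q a, a ∈ pg q ∧ p = !q ∧ x = barv a) ∨
  (x = K ∧ p = false)

/-! Every `λ`-bracket of two generators of `Cur̃(g)` has the form `u + λ (c • K)` with `K`
central and `∂K = 0`. Hence the coefficient of `λ^m γ^n` in the Jacobi identity vanishes on
both sides unless `(m, n)` is `(0, 0)`, `(1, 0)` or `(0, 1)`, where it becomes respectively the
Jacobi identity of `g`, the invariance of `(·|·)`, and invariance combined with the
skew-symmetry of `[·, ·]`. Skew-symmetry likewise reduces to the skew-symmetry of `[·, ·]` and
the supersymmetry of `(·|·)`, and (SEF1), (SEF2) are checked coefficient by coefficient using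
`D ā = a` and `D K = 0`. -/

namespace VAx

lemma sgn_comm (p q : Bool) : sgn p q = sgn q p := by
  cases p <;> cases q <;> rfl

lemma psgn_mul_self (p : Bool) : psgn p * psgn p = 1 := by
  cases p <;> norm_num [psgn]

def linExp (K u : V) (c : ℂ) : ℕ → V
  | 0 => u
  | 1 => c • K
  | _ + 2 => 0

section linExp

variable (K u : V) (c : ℂ)

@[simp] lemma linExp_zero : linExp K u c 0 = u := rfl

@[simp] lemma linExp_one : linExp K u c 1 = c • K := rfl

@[simp] lemma linExp_add_two (m : ℕ) : linExp K u c (m + 2) = 0 := rfl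

lemma linExp_of_two_le {m : ℕ} (hm : 2 ≤ m) : linExp K u c m = 0 := by
  obtain ⟨k, rfl⟩ := Nat.exists_eq_add_of_le' hm
  rfl

lemma smul_linExp (d : ℂ) : d • linExp K u c = linExp K (d • u) (d * c) := by
  funext m
  rcases m with _ | _ | m <;> simp [mul_smul]

lemma linExp_zero_right : linExp K u 0 = fun m => if m = 0 then u else 0 := by
  funext m
  rcases m with _ | _ | m <;> simp

end linExp

namespace LCAData

variable {S : LCAData V} {K : V}

lemma B_smul_right_eq_linExp {x y u : V} {c : ℂ} (h : S.B x y = linExp K u c) (d : ℂ) :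
    S.B x (d • y) = linExp K (d • u) (d * c) := by
  rw [map_smul, h, smul_linExp]

lemma B_smul_left_eq_linExp {x y u : V} {c : ℂ} (h : S.B x y = linExp K u c) (d : ℂ) :
    S.B (d • x) y = linExp K (d • u) (d * c) := by
  rw [S.B.map_smul₂, h, smul_linExp]

def IsCentral (S : LCAData V) (K : V) : Prop :=
  ∀ x m, S.B K x m = 0 ∧ S.B x K m = 0

namespace IsCentral

lemma B_smul_left (hK : S.IsCentral K) (c : ℂ) (y : V) : S.B (c • K) y = linExp K 0 0 := by
  funext i
  rw [S.B.map_smul₂, Pi.smul_apply, (hK y i).1, smul_zero]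
  rcases i with _ | _ | i <;> simp

lemma B_smul_right (hK : S.IsCentral K) (c : ℂ) (x : V) : S.B x (c • K) = linExp K 0 0 := by
  funext i
  rw [map_smul, Pi.smul_apply, (hK x i).2, smul_zero]
  rcases i with _ | _ | i <;> simp

lemma B_linExp_left (hK : S.IsCentral K) (u y : V) (c : ℂ) {j : ℕ} (hj : j ≠ 0) (i : ℕ) :
    S.B (linExp K u c j) y i = 0 := by
  rcases j with _ | _ | j
  · exact absurd rfl hj
  · simp [(hK y i).1]
  · simp

lemma jacEq_left (hK : S.IsCentral K) (p q : Bool) (y z : V) (m n : ℕ) :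
    S.JacEq p q K y z m n := by
  simp [JacEq, (hK _ _).1]

lemma jacEq_middle (hK : S.IsCentral K) (p q : Bool) (x z : V) (m n : ℕ) :
    S.JacEq p q x K z m n := by
  simp [JacEq, (hK _ _).1, (hK _ _).2]

lemma jacEq_right (hK : S.IsCentral K) (p q : Bool) (x y : V) (m n : ℕ) :
    S.JacEq p q x y K m n := by
  simp [JacEq, (hK _ _).2]

lemma skewEq_left (hK : S.IsCentral K) (p q : Bool) (y : V) (N : ℕ) :
    S.SkewEq p q K y N := by
  simp [SkewEq, (hK _ _).1, (hK _ _).2]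

lemma skewEq_right (hK : S.IsCentral K) (p q : Bool) (x : V) (N : ℕ) :
    S.SkewEq p q x K N := by
  simp [SkewEq, (hK _ _).1, (hK _ _).2]

lemma jacEq_of_linExp (hK : S.IsCentral K) {p q : Bool} {x y z u v w xv uz yw : V}
    {cxy cyz cxz cxv cuz cyw : ℂ}
    (hxy : S.B x y = linExp K u cxy) (hyz : S.B y z = linExp K v cyz)
    (hxz : S.B x z = linExp K w cxz) (hxv : S.B x v = linExp K xv cxv)
    (huz : S.B u z = linExp K uz cuz) (hyw : S.B y w = linExp K yw cyw)
    (h00 : xv = uz + sgn p q • yw) (h10 : cxv = cuz) (h01 : cuz + sgn p q * cyw = 0)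
    (m n : ℕ) : S.JacEq p q x y z m n := by
  have hsum : ∑ j ∈ Finset.range (m + 1),
      (Nat.choose (m - j + n) (m - j) : ℂ) • S.B (S.B x y j) z (m - j + n)
      = (Nat.choose (m + n) m : ℂ) • linExp K uz cuz (m + n) := by
    rw [Finset.sum_eq_single 0 (fun j _ hj => by rw [hxy, hK.B_linExp_left _ _ _ hj, smul_zero])
      (by simp), hxy, linExp_zero, huz, Nat.sub_zero]
  rw [JacEq, hsum, hyz, hxz]
  rcases m with _ | _ | m <;> rcases n with _ | _ | n <;>
    simp (disch := omega) [hxv, hyw, hK.B_smul_right, h00, h10, linExp_of_two_le, smul_smul,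
      ← add_smul, h01]

end IsCentral

lemma skewEq_of_linExp (hdK : S.der K = 0) {p q : Bool} {x y u u' : V} {c c' : ℂ}
    (hxy : S.B x y = linExp K u c) (hyx : S.B y x = linExp K u' c')
    (hu : u' = -sgn p q • u) (hc : c' = sgn p q * c) : S.SkewEq p q x y 1 := by
  intro k
  rw [hyx, hxy]
  rcases k with _ | _ | k
  · simp [Finset.sum_Icc_succ_top, hdK, hu]
  · simp [hc, mul_smul]
  · simp

end LCAData

end VAx

structure IsLieSuperalgebraWithInvariantForm (pg : Bool → Submodule ℂ g) (lb : g →ₗ[ℂ] g →ₗ[ℂ] g)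
    (bil : g →ₗ[ℂ] g →ₗ[ℂ] ℂ) : Prop where
  lb_mem : ∀ p q a b, a ∈ pg p → b ∈ pg q → lb a b ∈ pg (xor p q)
  lb_skew : ∀ p q a b, a ∈ pg p → b ∈ pg q → lb a b = -(sgn p q) • lb b a
  lb_jacobi : ∀ p q a b c, a ∈ pg p → b ∈ pg q →
    lb a (lb b c) = lb (lb a b) c + sgn p q • lb b (lb a c)
  bil_symm : ∀ p q a b, a ∈ pg p → b ∈ pg q → bil a b = sgn p q * bil b a
  bil_invariant : ∀ a b c, bil (lb a b) c = bil a (lb b c)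

namespace IsLieSuperalgebraWithInvariantForm

variable {pg : Bool → Submodule ℂ g} {lb : g →ₗ[ℂ] g →ₗ[ℂ] g} {bil : g →ₗ[ℂ] g →ₗ[ℂ] ℂ}

lemma bil_lb_swap (hg : IsLieSuperalgebraWithInvariantForm pg lb bil) {p q : Bool} {a b : g}
    (ha : a ∈ pg p) (hb : b ∈ pg q) (c : g) :
    bil b (lb a c) = -(sgn p q) * bil (lb a b) c := by
  rw [← hg.bil_invariant, hg.lb_skew q p b a hb ha, map_smul, LinearMap.smul_apply, smul_eq_mul]
  cases p <;> cases q <;> rfl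

end IsLieSuperalgebraWithInvariantForm

structure IsSuperCurrentBracket (S : LCAData V) (pg : Bool → Submodule ℂ g)
    (lb : g →ₗ[ℂ] g →ₗ[ℂ] g) (bil : g →ₗ[ℂ] g →ₗ[ℂ] ℂ) (cur barv : g →ₗ[ℂ] V) (K : V) :
    Prop where
  central : S.IsCentral K
  der_central : S.der K = 0
  cur_cur : ∀ a b, S.B (cur a) (cur b) = linExp K (cur (lb a b)) (bil a b)
  cur_bar : ∀ p a b, a ∈ pg p → S.B (cur a) (barv b) = linExp K (psgn p • barv (lb a b)) 0
  bar_cur : ∀ a b, S.B (barv a) (cur b) = linExp K (barv (lb a b)) 0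
  bar_bar : ∀ p a b, a ∈ pg p → S.B (barv a) (barv b) = linExp K ((psgn p * bil a b) • K) 0

namespace IsSuperCurrentBracket

variable {S : LCAData V} {pg : Bool → Submodule ℂ g} {lb : g →ₗ[ℂ] g →ₗ[ℂ] g}
  {bil : g →ₗ[ℂ] g →ₗ[ℂ] ℂ} {cur barv : g →ₗ[ℂ] V} {K : V}

lemma skewEq_cur_cur (hV : IsSuperCurrentBracket S pg lb bil cur barv K)
    (hg : IsLieSuperalgebraWithInvariantForm pg lb bil) {p q : Bool} {a b : g} (ha : a ∈ pg p)
    (hb : b ∈ pg q) :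
    S.SkewEq p q (cur a) (cur b) 1 :=
  skewEq_of_linExp hV.der_central (hV.cur_cur a b) (hV.cur_cur b a)
    (by rw [hg.lb_skew q p b a hb ha, map_smul, sgn_comm])
    (by rw [hg.bil_symm q p b a hb ha, sgn_comm])

lemma skewEq_cur_bar (hV : IsSuperCurrentBracket S pg lb bil cur barv K)
    (hg : IsLieSuperalgebraWithInvariantForm pg lb bil) {p q : Bool} {a b : g} (ha : a ∈ pg p)
    (hb : b ∈ pg q) :
    S.SkewEq p (!q) (cur a) (barv b) 1 :=
  skewEq_of_linExp hV.der_central (hV.cur_bar p a b ha) (hV.bar_cur b a)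
    (by rw [hg.lb_skew q p b a hb ha, map_smul, smul_smul]
        cases p <;> cases q <;> norm_num [sgn, psgn])
    (mul_zero _).symm

lemma skewEq_bar_cur (hV : IsSuperCurrentBracket S pg lb bil cur barv K)
    (hg : IsLieSuperalgebraWithInvariantForm pg lb bil) {p q : Bool} {a b : g} (ha : a ∈ pg p)
    (hb : b ∈ pg q) :
    S.SkewEq (!p) q (barv a) (cur b) 1 :=
  skewEq_of_linExp hV.der_central (hV.bar_cur a b) (hV.cur_bar q b a hb)
    (by rw [hg.lb_skew p q a b ha hb, map_smul, smul_smul]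
        cases p <;> cases q <;> norm_num [sgn, psgn])
    (mul_zero _).symm

lemma skewEq_bar_bar (hV : IsSuperCurrentBracket S pg lb bil cur barv K)
    (hg : IsLieSuperalgebraWithInvariantForm pg lb bil) {p q : Bool} {a b : g} (ha : a ∈ pg p)
    (hb : b ∈ pg q) :
    S.SkewEq (!p) (!q) (barv a) (barv b) 1 :=
  skewEq_of_linExp hV.der_central (hV.bar_bar p a b ha) (hV.bar_bar q b a hb)
    (by rw [hg.bil_symm q p b a hb ha, smul_smul]
        cases p <;> cases q <;> norm_num [sgn, psgn])
    (mul_zero _).symm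

lemma jacEq_cur_cur_cur (hV : IsSuperCurrentBracket S pg lb bil cur barv K)
    (hg : IsLieSuperalgebraWithInvariantForm pg lb bil) {p q : Bool} {a b : g} (ha : a ∈ pg p)
    (hb : b ∈ pg q) (c : g) (m n : ℕ) : S.JacEq p q (cur a) (cur b) (cur c) m n :=
  hV.central.jacEq_of_linExp (hV.cur_cur a b) (hV.cur_cur b c) (hV.cur_cur a c)
    (hV.cur_cur a _) (hV.cur_cur _ c) (hV.cur_cur b _)
    (by rw [hg.lb_jacobi p q a b c ha hb, map_add, map_smul])
    (hg.bil_invariant a b c).symm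
    (by rw [hg.bil_lb_swap ha hb]; cases p <;> cases q <;> norm_num [sgn])
    m n

lemma jacEq_cur_cur_bar (hV : IsSuperCurrentBracket S pg lb bil cur barv K)
    (hg : IsLieSuperalgebraWithInvariantForm pg lb bil) {p q : Bool} {a b : g} (ha : a ∈ pg p)
    (hb : b ∈ pg q) (c : g) (m n : ℕ) : S.JacEq p q (cur a) (cur b) (barv c) m n :=
  hV.central.jacEq_of_linExp (hV.cur_cur a b) (hV.cur_bar q b c hb) (hV.cur_bar p a c ha)
    (B_smul_right_eq_linExp (hV.cur_bar p a _ ha) _)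
    (hV.cur_bar _ _ c (hg.lb_mem p q a b ha hb))
    (B_smul_right_eq_linExp (hV.cur_bar q b _ hb) _)
    (by rw [hg.lb_jacobi p q a b c ha hb, map_add, map_smul]
        cases p <;> cases q <;> norm_num [sgn, psgn])
    (mul_zero _) (by simp)
    m n

lemma jacEq_cur_bar_cur (hV : IsSuperCurrentBracket S pg lb bil cur barv K)
    (hg : IsLieSuperalgebraWithInvariantForm pg lb bil) {p q : Bool} {a b : g} (ha : a ∈ pg p)
    (hb : b ∈ pg q) (c : g) (m n : ℕ) : S.JacEq p (!q) (cur a) (barv b) (cur c) m n :=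
  hV.central.jacEq_of_linExp (hV.cur_bar p a b ha) (hV.bar_cur b c) (hV.cur_cur a c)
    (hV.cur_bar p a _ ha) (B_smul_left_eq_linExp (hV.bar_cur _ c) _) (hV.bar_cur b _)
    (by rw [hg.lb_jacobi p q a b c ha hb, map_add, map_smul]
        cases p <;> cases q <;> norm_num [sgn, psgn])
    (mul_zero _).symm (by simp)
    m n

lemma jacEq_cur_bar_bar (hV : IsSuperCurrentBracket S pg lb bil cur barv K)
    (hg : IsLieSuperalgebraWithInvariantForm pg lb bil) {p q : Bool} {a b : g} (ha : a ∈ pg p)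
    (hb : b ∈ pg q) (c : g) (m n : ℕ) : S.JacEq p (!q) (cur a) (barv b) (barv c) m n :=
  hV.central.jacEq_of_linExp (hV.cur_bar p a b ha) (hV.bar_bar q b c hb) (hV.cur_bar p a c ha)
    (hV.central.B_smul_right _ _)
    (B_smul_left_eq_linExp (hV.bar_bar _ _ c (hg.lb_mem p q a b ha hb)) _)
    (B_smul_right_eq_linExp (hV.bar_bar q b _ hb) _)
    (by rw [hg.bil_lb_swap ha hb]
        cases p <;> cases q <;> norm_num [sgn, psgn, smul_smul])
    (mul_zero _).symm (by simp)
    m n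

lemma jacEq_bar_cur_cur (hV : IsSuperCurrentBracket S pg lb bil cur barv K)
    (hg : IsLieSuperalgebraWithInvariantForm pg lb bil) {p q : Bool} {a b : g} (ha : a ∈ pg p)
    (hb : b ∈ pg q) (c : g) (m n : ℕ) : S.JacEq (!p) q (barv a) (cur b) (cur c) m n :=
  hV.central.jacEq_of_linExp (hV.bar_cur a b) (hV.cur_cur b c) (hV.bar_cur a c)
    (hV.bar_cur a _) (hV.bar_cur _ c) (hV.cur_bar q b _ hb)
    (by rw [hg.lb_jacobi p q a b c ha hb, map_add, map_smul]
        cases p <;> cases q <;> norm_num [sgn, psgn])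
    rfl (by simp)
    m n

lemma jacEq_bar_cur_bar (hV : IsSuperCurrentBracket S pg lb bil cur barv K)
    (hg : IsLieSuperalgebraWithInvariantForm pg lb bil) {p q : Bool} {a b : g} (ha : a ∈ pg p)
    (hb : b ∈ pg q) (c : g) (m n : ℕ) : S.JacEq (!p) q (barv a) (cur b) (barv c) m n :=
  hV.central.jacEq_of_linExp (hV.bar_cur a b) (hV.cur_bar q b c hb) (hV.bar_bar p a c ha)
    (B_smul_right_eq_linExp (hV.bar_bar p a _ ha) _)
    (hV.bar_bar _ _ c (hg.lb_mem p q a b ha hb))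
    (hV.central.B_smul_right _ _)
    (by rw [hg.bil_invariant a b c]
        cases p <;> cases q <;> norm_num [sgn, psgn, smul_smul])
    (mul_zero _) (by simp)
    m n

lemma jacEq_bar_bar_cur (hV : IsSuperCurrentBracket S pg lb bil cur barv K)
    (hg : IsLieSuperalgebraWithInvariantForm pg lb bil) {p q : Bool} {a b : g} (ha : a ∈ pg p)
    (hb : b ∈ pg q) (c : g) (m n : ℕ) : S.JacEq (!p) (!q) (barv a) (barv b) (cur c) m n :=
  hV.central.jacEq_of_linExp (hV.bar_bar p a b ha) (hV.bar_cur b c) (hV.bar_cur a c)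
    (hV.bar_bar p a _ ha) (hV.central.B_smul_left _ _) (hV.bar_bar q b _ hb)
    (by rw [hg.bil_lb_swap ha hb, ← hg.bil_invariant]
        cases p <;> cases q <;> norm_num [sgn, psgn, smul_smul])
    rfl (by simp)
    m n

lemma jacEq_bar_bar_bar (hV : IsSuperCurrentBracket S pg lb bil cur barv K) {p q : Bool} {a b : g}
    (ha : a ∈ pg p) (hb : b ∈ pg q) (c : g) (m n : ℕ) :
    S.JacEq (!p) (!q) (barv a) (barv b) (barv c) m n :=
  hV.central.jacEq_of_linExp (hV.bar_bar p a b ha) (hV.bar_bar q b c hb) (hV.bar_bar p a c ha)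
    (hV.central.B_smul_right _ _) (hV.central.B_smul_left _ _) (hV.central.B_smul_right _ _)
    (by simp) rfl (by simp)
    m n

lemma skewEq_of_curGen (hV : IsSuperCurrentBracket S pg lb bil cur barv K)
    (hg : IsLieSuperalgebraWithInvariantForm pg lb bil) {x y : V} {p q : Bool}
    (hx : CurGen pg cur barv K x p) (hy : CurGen pg cur barv K y q) : S.SkewEq p q x y 1 := by
  rcases hx with ⟨a, ha, rfl⟩ | ⟨p, a, ha, rfl, rfl⟩ | ⟨rfl, rfl⟩
  · rcases hy with ⟨b, hb, rfl⟩ | ⟨q, b, hb, rfl, rfl⟩ | ⟨rfl, rfl⟩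
    · exact hV.skewEq_cur_cur hg ha hb
    · exact hV.skewEq_cur_bar hg ha hb
    · exact hV.central.skewEq_right _ _ _ _
  · rcases hy with ⟨b, hb, rfl⟩ | ⟨q, b, hb, rfl, rfl⟩ | ⟨rfl, rfl⟩
    · exact hV.skewEq_bar_cur hg ha hb
    · exact hV.skewEq_bar_bar hg ha hb
    · exact hV.central.skewEq_right _ _ _ _
  · exact hV.central.skewEq_left _ _ _ _

lemma jacEq_of_curGen (hV : IsSuperCurrentBracket S pg lb bil cur barv K)
    (hg : IsLieSuperalgebraWithInvariantForm pg lb bil) {x y z : V} {p q r : Bool}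
    (hx : CurGen pg cur barv K x p) (hy : CurGen pg cur barv K y q)
    (hz : CurGen pg cur barv K z r) (m n : ℕ) : S.JacEq p q x y z m n := by
  rcases hx with ⟨a, ha, rfl⟩ | ⟨p, a, ha, rfl, rfl⟩ | ⟨rfl, rfl⟩
  · rcases hy with ⟨b, hb, rfl⟩ | ⟨q, b, hb, rfl, rfl⟩ | ⟨rfl, rfl⟩
    · rcases hz with ⟨c, -, rfl⟩ | ⟨r, c, -, rfl, rfl⟩ | ⟨rfl, rfl⟩
      · exact hV.jacEq_cur_cur_cur hg ha hb c m n
      · exact hV.jacEq_cur_cur_bar hg ha hb c m n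
      · exact hV.central.jacEq_right _ _ _ _ _ _
    · rcases hz with ⟨c, -, rfl⟩ | ⟨r, c, -, rfl, rfl⟩ | ⟨rfl, rfl⟩
      · exact hV.jacEq_cur_bar_cur hg ha hb c m n
      · exact hV.jacEq_cur_bar_bar hg ha hb c m n
      · exact hV.central.jacEq_right _ _ _ _ _ _
    · exact hV.central.jacEq_middle _ _ _ _ _ _
  · rcases hy with ⟨b, hb, rfl⟩ | ⟨q, b, hb, rfl, rfl⟩ | ⟨rfl, rfl⟩
    · rcases hz with ⟨c, -, rfl⟩ | ⟨r, c, -, rfl, rfl⟩ | ⟨rfl, rfl⟩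
      · exact hV.jacEq_bar_cur_cur hg ha hb c m n
      · exact hV.jacEq_bar_cur_bar hg ha hb c m n
      · exact hV.central.jacEq_right _ _ _ _ _ _
    · rcases hz with ⟨c, -, rfl⟩ | ⟨r, c, -, rfl, rfl⟩ | ⟨rfl, rfl⟩
      · exact hV.jacEq_bar_bar_cur hg ha hb c m n
      · exact hV.jacEq_bar_bar_bar ha hb c m n
      · exact hV.central.jacEq_right _ _ _ _ _ _
    · exact hV.central.jacEq_middle _ _ _ _ _ _
  · exact hV.central.jacEq_left _ _ _ _ _ _

lemma sef_bar_bar (hV : IsSuperCurrentBracket S pg lb bil cur barv K) {D : Module.End ℂ V}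
    (hDbar : ∀ a, D (barv a) = cur a) (hDK : D K = 0) {p : Bool} {a : g} (ha : a ∈ pg p)
    (b : g) : S.SEF D (!p) (barv a) (barv b) := by
  rw [SEF, hDbar, hDbar, hV.cur_cur, hV.cur_bar p a b ha, hV.bar_bar p a b ha, hV.bar_cur]
  constructor <;> intro m <;> rcases m with _ | _ | _ | m <;>
    simp [lam, map_smul, hDbar, hDK, smul_smul, ← mul_assoc, psgn_mul_self]

end IsSuperCurrentBracket

theorem stmt_16_general
    (S : VAx.LCAData V)
    (pg : Bool → Submodule ℂ g)
    (lb : g →ₗ[ℂ] g →ₗ[ℂ] g) (bil : g →ₗ[ℂ] g →ₗ[ℂ] ℂ)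
    -- Lie superalgebra axioms for lb (on homogeneous elements):
    (hlbhom : ∀ p q a b, a ∈ pg p → b ∈ pg q → lb a b ∈ pg (xor p q))
    (hlbskew : ∀ p q a b, a ∈ pg p → b ∈ pg q → lb a b = -(sgn p q) • lb b a)
    (hlbjac : ∀ p q a b c, a ∈ pg p → b ∈ pg q →
      lb a (lb b c) = lb (lb a b) c + sgn p q • lb b (lb a c))
    -- the bilinear form is even, supersymmetric and invariant:
    (hbilsym : ∀ p q a b, a ∈ pg p → b ∈ pg q → bil a b = sgn p q * bil b a)
    (hbilinv : ∀ a b c, bil (lb a b) c = bil a (lb b c))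
    -- the embeddings of g, ḡ and the central element K:
    (cur barv : g →ₗ[ℂ] V) (K : V)
    (hKc : ∀ x m, S.B K x m = 0 ∧ S.B x K m = 0) (hdK : S.der K = 0)
    -- the λ-brackets of Cur̃(g):
    (h1 : ∀ a b : g, S.B (cur a) (cur b) = fun m => match m with
      | 0 => cur (lb a b) | 1 => (bil a b) • K | _ => 0)
    (h2 : ∀ (pa : Bool) (a b : g), a ∈ pg pa →
      S.B (cur a) (barv b) = fun m => if m = 0 then psgn pa • barv (lb a b) else 0)
    (h3 : ∀ a b : g, S.B (barv a) (cur b) = fun m => if m = 0 then barv (lb a b) else 0)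
    (h4 : ∀ (pa : Bool) (a b : g), a ∈ pg pa →
      S.B (barv a) (barv b) = fun m => if m = 0 then (psgn pa * bil a b) • K else 0)
    -- the odd derivation D:
    (D : Module.End ℂ V) (hDbar : ∀ a : g, D (barv a) = cur a)
    (hDK : D K = 0) :
    -- (1) Cur̃(g) is a Lie conformal algebra (skew-symmetry and Jacobi on generators):
    ((∀ (x : V) (p : Bool), CurGen pg cur barv K x p →
      ∀ (y : V) (q : Bool), CurGen pg cur barv K y q →
        S.SkewEq p q x y 1 ∧
        ∀ (z : V) (r : Bool), CurGen pg cur barv K z r →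
          ∀ m n, S.JacEq p q x y z m n)) ∧
    -- (2) ḡ is a supersymmetric generator in the D-direction:
    (∀ (pa : Bool) (a : g), a ∈ pg pa → ∀ (pb : Bool) (b : g), b ∈ pg pb →
      S.SEF D (!pa) (barv a) (barv b)) := by
  have hg : IsLieSuperalgebraWithInvariantForm pg lb bil :=
    ⟨hlbhom, hlbskew, hlbjac, hbilsym, hbilinv⟩
  have hV : IsSuperCurrentBracket S pg lb bil cur barv K :=
    { central := hKc
      der_central := hdK
      cur_cur := fun a b => by rw [h1]; funext m; rcases m with _ | _ | m <;> rfl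
      cur_bar := fun p a b ha => (h2 p a b ha).trans (linExp_zero_right _ _).symm
      bar_cur := fun a b => (h3 a b).trans (linExp_zero_right _ _).symm
      bar_bar := fun p a b ha => (h4 p a b ha).trans (linExp_zero_right _ _).symm }
  exact ⟨fun x p hx y q hy => ⟨hV.skewEq_of_curGen hg hx hy,
      fun z r hz => hV.jacEq_of_curGen hg hx hy hz⟩,
    fun pa a ha pb b hb => hV.sef_bar_bar hDbar hDK ha b⟩

/-- Let `g` be a Lie superalgebra with an even invariant supersymmetric bilinear
form `(·|·)`. Define on `Cur̃(g) = ℂ[∂]⊗(g ⊕ ḡ) ⊕ ℂK` the λ-brackets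
`[a_λ b] = [a,b] + Kλ(a|b)`, `[a_λ b̄] = (-1)^{p(a)} overline([a,b])`,
`[ā_λ b] = overline([a,b])` (skew-symmetry), `[ā_λ b̄] = (-1)^{p(a)}K(a|b)`, with `K` central
and `∂K = 0`. Then `Cur̃(g)` is a Lie conformal algebra (skew-symmetry and the Jacobi identity
hold among the generators), and with the odd derivation `D` given by `D(ā) = a`, `D(a) = ∂ā`,
`D(K) = 0`, the set `ḡ` is a supersymmetric generator in the `D`-direction, i.e. (SEF1) and
(SEF2) hold for all pairs from `ḡ`. -/
theorem stmt_16
    (S : VAx.LCAData V)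
    (hsq1 : ∀ a b, S.B (S.der a) b 0 = 0 ∧ ∀ m, S.B (S.der a) b (m + 1) = - S.B a b m)
    (hsq2 : ∀ a b, S.B a (S.der b) 0 = S.der (S.B a b 0) ∧
      ∀ m, S.B a (S.der b) (m + 1) = S.der (S.B a b (m + 1)) + S.B a b m)
    (pg : Bool → Submodule ℂ g)
    (lb : g →ₗ[ℂ] g →ₗ[ℂ] g) (bil : g →ₗ[ℂ] g →ₗ[ℂ] ℂ)
    -- Lie superalgebra axioms for lb (on homogeneous elements):
    (hlbhom : ∀ p q a b, a ∈ pg p → b ∈ pg q → lb a b ∈ pg (xor p q))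
    (hlbskew : ∀ p q a b, a ∈ pg p → b ∈ pg q → lb a b = -(sgn p q) • lb b a)
    (hlbjac : ∀ p q a b c, a ∈ pg p → b ∈ pg q →
      lb a (lb b c) = lb (lb a b) c + sgn p q • lb b (lb a c))
    -- the bilinear form is even, supersymmetric and invariant:
    (hbileven : ∀ p q a b, a ∈ pg p → b ∈ pg q → p ≠ q → bil a b = 0)
    (hbilsym : ∀ p q a b, a ∈ pg p → b ∈ pg q → bil a b = sgn p q * bil b a)
    (hbilinv : ∀ a b c, bil (lb a b) c = bil a (lb b c))
    -- the embeddings of g, ḡ and the central element K: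
    (cur barv : g →ₗ[ℂ] V) (K : V)
    (hcurp : ∀ p, ∀ a ∈ pg p, cur a ∈ S.part p)
    (hbarp : ∀ p, ∀ a ∈ pg p, barv a ∈ S.part (!p))
    (hKp : K ∈ S.part false)
    (hKc : ∀ x m, S.B K x m = 0 ∧ S.B x K m = 0) (hdK : S.der K = 0)
    -- the λ-brackets of Cur̃(g):
    (h1 : ∀ a b : g, S.B (cur a) (cur b) = fun m => match m with
      | 0 => cur (lb a b) | 1 => (bil a b) • K | _ => 0)
    (h2 : ∀ (pa : Bool) (a b : g), a ∈ pg pa →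
      S.B (cur a) (barv b) = fun m => if m = 0 then psgn pa • barv (lb a b) else 0)
    (h3 : ∀ a b : g, S.B (barv a) (cur b) = fun m => if m = 0 then barv (lb a b) else 0)
    (h4 : ∀ (pa : Bool) (a b : g), a ∈ pg pa →
      S.B (barv a) (barv b) = fun m => if m = 0 then (psgn pa * bil a b) • K else 0)
    -- the odd derivation D:
    (D : Module.End ℂ V) (hDbar : ∀ a : g, D (barv a) = cur a)
    (hDcur : ∀ a : g, D (cur a) = S.der (barv a)) (hDK : D K = 0)
    (hDD : ∀ x, D (D x) = S.der x) :
    -- (1) Cur̃(g) is a Lie conformal algebra (skew-symmetry and Jacobi on generators):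
    ((∀ (x : V) (p : Bool), CurGen pg cur barv K x p →
      ∀ (y : V) (q : Bool), CurGen pg cur barv K y q →
        S.SkewEq p q x y 1 ∧
        ∀ (z : V) (r : Bool), CurGen pg cur barv K z r →
          ∀ m n, S.JacEq p q x y z m n)) ∧
    -- (2) ḡ is a supersymmetric generator in the D-direction:
    (∀ (pa : Bool) (a : g), a ∈ pg pa → ∀ (pb : Bool) (b : g), b ∈ pg pb →
      S.SEF D (!pa) (barv a) (barv b)) :=
  stmt_16_general S pg lb bil hlbhom hlbskew hlbjac hbilsym hbilinv cur barv K hKc hdK h1 h2 h3 h4 D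
    hDbar hDK
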